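/- Let C be a nodal curve with marked smooth point σ(0), and let Z and Z' be 3-tails of C that are both free with respect to every tail in the nested set T²_{γ,γ'} of 2-tails associated to (C_γ, C_{γ'}), with C_γ ∪ C_{γ'} ⊆ Z ∧ Z' and σ(0) ∈ Z^c ∧ (Z')^c. Then Z ∧ Z' is a 3-tail of C that is free with respect to every tail of T²_{γ,γ'}. -/

import Mathlib

open Finset

/-- A combinatorial model of a nodal curve: `V` is the set of irreducible
components, `N` the set of nodes, `ends e` the (one or two) components through
the node `e`, `gen v` the geometric genus of the component `v`, and `base` the
component containing the marked smooth point `σ(0)`. -/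
structure NodalGraph where
  V : Type
  N : Type
  [fV : Fintype V]
  [dV : DecidableEq V]
  [fN : Fintype N]
  [dN : DecidableEq N]
  ends : N → V × V
  gen : V → ℕ
  base : V

attribute [instance] NodalGraph.fV NodalGraph.dV NodalGraph.fN NodalGraph.dN

namespace NodalGraph

variable (G : NodalGraph)

/-- Two components are adjacent if some node lies on both. -/
def Adj (a b : G.V) : Prop := ∃ e, G.ends e = (a, b) ∨ G.ends e = (b, a)

/-- The set of terminal points of a subcurve `Z`, i.e. the nodes in `Z ∩ Zᶜ`. -/
def Term (Z : Finset G.V) : Finset G.N :=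
  univ.filter (fun e =>
    ((G.ends e).1 ∈ Z ∧ (G.ends e).2 ∉ Z) ∨ ((G.ends e).1 ∉ Z ∧ (G.ends e).2 ∈ Z))

/-- `k_Z`, the number of terminal points of `Z`. -/
def k (Z : Finset G.V) : ℕ := (G.Term Z).card

/-- A (nonempty) subcurve is connected. -/
def ConnSub (Z : Finset G.V) : Prop :=
  Z.Nonempty ∧ ∀ u ∈ Z, ∀ v ∈ Z,
    Relation.ReflTransGen (fun a b => a ∈ Z ∧ b ∈ Z ∧ G.Adj a b) u v

/-- The whole curve is connected. -/
def Connected : Prop := G.ConnSub univ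

/-- A tail: a proper subcurve `Z` with both `Z` and `Zᶜ` connected. -/
def IsTail (Z : Finset G.V) : Prop := Z ≠ univ ∧ G.ConnSub Z ∧ G.ConnSub Zᶜ

/-- A `m`-tail: a tail with `k_Z = m`. -/
def IsKTail (Z : Finset G.V) (m : ℕ) : Prop := G.IsTail Z ∧ G.k Z = m

/-- The node `e` lies on the component `v`. -/
def onComp (e : G.N) (v : G.V) : Prop := (G.ends e).1 = v ∨ (G.ends e).2 = v

/-- The node `e`, as a point of the curve, lies on the subcurve `Z`. -/
def nodeOn (e : G.N) (Z : Finset G.V) : Prop := (G.ends e).1 ∈ Z ∨ (G.ends e).2 ∈ Z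

/-- The subcurve `Z` crosses the node `e`: both branches of `e` lie in `Z`. -/
def crosses (Z : Finset G.V) (e : G.N) : Prop := (G.ends e).1 ∈ Z ∧ (G.ends e).2 ∈ Z

/-- `Z ≺ Z'`: strict inclusion with disjoint terminal points. -/
def prec (Z Z' : Finset G.V) : Prop := Z ⊂ Z' ∧ G.Term Z ∩ G.Term Z' = ∅

/-- The pair `(Z, Z')` is free: disjoint terminal points. -/
def free (Z Z' : Finset G.V) : Prop := G.Term Z ∩ G.Term Z' = ∅

/-- The pair `(Z, Z')` is perfect. -/
def perfect (Z Z' : Finset G.V) : Prop := Z ⊆ Z' ∨ Z' ⊆ Z ∨ Zᶜ ⊆ Z' ∨ Z' ⊆ Zᶜ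

/-- `T¹_γ`: the nested set of 1-tails containing `C_γ` and avoiding `σ(0)`. -/
def T1 (γ : G.V) : Set (Finset G.V) := { Z | G.IsKTail Z 1 ∧ γ ∈ Z ∧ G.base ∉ Z }

/-- The defining condition for the 2-tails entering `T²_{γ,γ'}`. -/
def cond2 (γ γ' : G.V) (Z : Finset G.V) : Prop :=
  G.IsKTail Z 2 ∧ γ ∈ Z ∧ γ' ∈ Z ∧ G.base ∉ Z

/-- `W 0 ≺ W 1 ≺ ⋯ ≺ W (M-1)` is the nested set `T²_{γ,γ'}` of 2-tails:
each `W t` is minimal among the 2-tails `Z ⊇ C_γ ∪ C_γ'` with `σ(0) ∈ Zᶜ`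
and `W (t-1) ≺ Z` (starting from `W_{-1} = ∅`), and the chain is maximal. -/
def IsNested2 (γ γ' : G.V) (M : ℕ) (W : ℕ → Finset G.V) : Prop :=
  (∀ t < M, Minimal (fun Z => G.cond2 γ γ' Z ∧ G.prec (if t = 0 then ∅ else W (t - 1)) Z) (W t)) ∧
  ¬ ∃ Z, G.cond2 γ γ' Z ∧ G.prec (if M = 0 then ∅ else W (M - 1)) Z

/-- The set underlying a finite chain `W 0, …, W (M-1)`. -/
def chainSet (M : ℕ) (W : ℕ → Finset G.V) : Set (Finset G.V) := { Z | ∃ t < M, W t = Z }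

/-- The defining condition for the 3-tails entering `T³_{γ,γ'}`:
3-tails that are moreover free with respect to every member of `T²_{γ,γ'}`. -/
def cond3 (γ γ' : G.V) (T2 : Set (Finset G.V)) (Z : Finset G.V) : Prop :=
  G.IsKTail Z 3 ∧ γ ∈ Z ∧ γ' ∈ Z ∧ G.base ∉ Z ∧ ∀ W ∈ T2, G.free Z W

/-- `W 0 ≺ ⋯ ≺ W (M-1)` is the nested set `T³_{γ,γ'}` of 3-tails (relative to
the set `T2` of nested 2-tails). -/
def IsNested3 (γ γ' : G.V) (T2 : Set (Finset G.V)) (M : ℕ) (W : ℕ → Finset G.V) : Prop :=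
  (∀ t < M, Minimal (fun Z => G.cond3 γ γ' T2 Z ∧ G.prec (if t = 0 then ∅ else W (t - 1)) Z) (W t)) ∧
  ¬ ∃ Z, G.cond3 γ γ' T2 Z ∧ G.prec (if M = 0 then ∅ else W (M - 1)) Z

end NodalGraph

/-!
Split the components into `P = Z ∩ Z'`, `Q = Z \ Z'`, `R = Z' \ Z` and `S = (Z ∪ Z')ᶜ` and
count the nodes between the parts. Then `k_Z`, `k_{Z'}`, `k_P` and `k_{Z ∪ Z'}` are sums of such
counts, and if neither tail contains the other, connectedness of `Z`, `Z'`, `Zᶜ`, `Z'ᶜ` makes the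
`P–Q`, `P–R`, `Q–S` and `R–S` counts positive. For two 3-tails this leaves `k_P = 3`, `k_P = 2`
or `k_{Z ∪ Z'} = 2`, and a count equal to one makes the relevant part connected. In the last two
cases `P`, resp. `Z ∪ Z'`, is a 2-tail containing `C_γ ∪ C_{γ'}`, avoiding `σ(0)` and free with
respect to `T²_{γ,γ'}`, since its terminal points are terminal points of `Z` or `Z'`. The same
count shows that two free such 2-tails meet in another one, so by minimality every member of
`T²_{γ,γ'}` lies inside it, and it would extend the maximal chain.
-/

namespace NodalGraph

variable {G : NodalGraph}

def Joins (G : NodalGraph) (e : G.N) (x y : G.V) : Prop := G.ends e = (x, y) ∨ G.ends e = (y, x)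

def Reach (G : NodalGraph) (S : Finset G.V) : G.V → G.V → Prop :=
  Relation.ReflTransGen (fun a b => a ∈ S ∧ b ∈ S ∧ G.Adj a b)

def cut (G : NodalGraph) (A B : Finset G.V) : Finset G.N :=
  univ.filter fun e => ((G.ends e).1 ∈ A ∧ (G.ends e).2 ∈ B) ∨ ((G.ends e).1 ∈ B ∧ (G.ends e).2 ∈ A)

section Reach

variable {S T : Finset G.V} {u v w : G.V}

lemma Reach.mono (hST : S ⊆ T) (h : G.Reach S u v) : G.Reach T u v :=
  Relation.ReflTransGen.mono (fun _ _ ⟨ha, hb, hab⟩ => ⟨hST ha, hST hb, hab⟩) _ _ h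

lemma Reach.symm (h : G.Reach S u v) : G.Reach S v u := by
  induction h with
  | refl => exact Relation.ReflTransGen.refl
  | tail _ hbc ih =>
    obtain ⟨hb, hc, e, he⟩ := hbc
    exact Relation.ReflTransGen.head ⟨hc, hb, e, he.symm⟩ ih

lemma Reach.trans (h : G.Reach S u v) (h' : G.Reach S v w) : G.Reach S u w :=
  Relation.ReflTransGen.trans h h'

lemma Reach.exists_exit {A : Finset G.V} (h : G.Reach S u v) (hu : u ∈ A) (hv : v ∉ A) :
    ∃ x y e, x ∈ S ∩ A ∧ y ∈ S \ A ∧ G.Joins e x y ∧ G.Reach (S ∩ A) u x := by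
  induction h using Relation.ReflTransGen.head_induction_on with
  | refl => exact absurd hu hv
  | @head a b hab _ ih =>
    obtain ⟨haS, hbS, e, he⟩ := hab
    by_cases hbA : b ∈ A
    · obtain ⟨x, y, e', hx, hy, he', hbx⟩ := ih hbA
      exact ⟨x, y, e', hx, hy, he', hbx.head ⟨mem_inter.2 ⟨haS, hu⟩, mem_inter.2 ⟨hbS, hbA⟩, e, he⟩⟩
    · exact ⟨a, b, e, mem_inter.2 ⟨haS, hu⟩, mem_sdiff.2 ⟨hbS, hbA⟩, he, .refl⟩

end Reach

section Connected

variable {A B : Finset G.V} {x : G.V}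

lemma ConnSub.reach {u v : G.V} (h : G.ConnSub A) (hu : u ∈ A) (hv : v ∈ A) : G.Reach A u v :=
  h.2 u hu v hv

lemma connSub_of_forall_reach (hx : x ∈ A) (h : ∀ u ∈ A, G.Reach A u x) : G.ConnSub A :=
  ⟨⟨x, hx⟩, fun u hu v hv => (h u hu).trans (h v hv).symm⟩

lemma ConnSub.union (hA : G.ConnSub A) (hB : G.ConnSub B) (hxA : x ∈ A) (hxB : x ∈ B) :
    G.ConnSub (A ∪ B) := by
  refine connSub_of_forall_reach (mem_union_left _ hxA) fun u hu => ?_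
  rcases mem_union.1 hu with hu | hu
  · exact (hA.reach hu hxA).mono subset_union_left
  · exact (hB.reach hu hxB).mono subset_union_right

end Connected

section Cut

variable {A B : Finset G.V} {e : G.N} {x y : G.V}

lemma cut_comm : G.cut A B = G.cut B A := by
  ext e; simp only [cut, mem_filter, mem_univ, true_and]; tauto

lemma mem_cut_of_joins (h : G.Joins e x y) (hx : x ∈ A) (hy : y ∈ B) : e ∈ G.cut A B := by
  rcases h with h | h <;> simp [cut, h, hx, hy]

lemma exists_joins_of_mem_cut (h : e ∈ G.cut A B) : ∃ x ∈ A, ∃ y ∈ B, G.Joins e x y := by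
  simp only [cut, mem_filter, mem_univ, true_and] at h
  rcases h with ⟨h1, h2⟩ | ⟨h1, h2⟩
  · exact ⟨_, h1, _, h2, Or.inl rfl⟩
  · exact ⟨_, h2, _, h1, Or.inr rfl⟩

lemma Joins.eq_of_mem {x' y' : G.V} (h : G.Joins e x y) (h' : G.Joins e x' y')
    (hx : x ∈ A) (hx' : x' ∈ A) (hy : y ∉ A) (hy' : y' ∉ A) : x = x' := by
  rcases h with h | h <;> rcases h' with h' | h' <;> rw [h] at h' <;>
    simp only [Prod.mk.injEq] at h' <;> grind

lemma cut_nonempty (hU : G.ConnSub (A ∪ B)) (hAB : Disjoint A B) (hA : A.Nonempty)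
    (hB : B.Nonempty) : (G.cut A B).Nonempty := by
  obtain ⟨a, ha⟩ := hA
  obtain ⟨b, hb⟩ := hB
  obtain ⟨x, y, e, hx, hy, he, -⟩ :=
    (hU.reach (mem_union_left _ ha) (mem_union_right _ hb)).exists_exit ha (disjoint_right.1 hAB hb)
  rw [mem_sdiff, mem_union] at hy
  exact ⟨e, mem_cut_of_joins he (mem_inter.1 hx).2 (hy.1.resolve_left hy.2)⟩

/-- Every walk from `A` into `B` inside `A ∪ B` leaves `A` through the node `e`, hence at its
`A`-end. -/
lemma connSub_of_cut_eq_singleton (hU : G.ConnSub (A ∪ B)) (hAB : Disjoint A B)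
    (hB : B.Nonempty) (hcut : G.cut A B = {e}) : G.ConnSub A := by
  obtain ⟨x, hx, y, hy, he⟩ := exists_joins_of_mem_cut (hcut ▸ mem_singleton_self e)
  obtain ⟨b, hb⟩ := hB
  refine connSub_of_forall_reach hx fun u hu => ?_
  obtain ⟨x', y', e', hx', hy', he', hux'⟩ :=
    (hU.reach (mem_union_left _ hu) (mem_union_right _ hb)).exists_exit hu (disjoint_right.1 hAB hb)
  rw [mem_sdiff, mem_union] at hy'
  have he'e : e' = e := mem_singleton.1 (hcut ▸ mem_cut_of_joins he' (mem_inter.1 hx').2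
    (hy'.1.resolve_left hy'.2))
  rw [he'e] at he'
  rw [union_inter_cancel_left] at hux'
  rwa [he'.eq_of_mem he (mem_inter.1 hx').2 hx hy'.2 (disjoint_right.1 hAB hy)] at hux'

end Cut

section FourParts

variable (Z Z' : Finset G.V)

lemma k_eq_sum_card_cut_left : G.k Z =
    #(G.cut (Z ∩ Z') (Z' \ Z)) + #(G.cut (Z ∩ Z') (Z ∪ Z')ᶜ) +
      #(G.cut (Z \ Z') (Z' \ Z)) + #(G.cut (Z \ Z') (Z ∪ Z')ᶜ) := by
  simp only [k, Term, cut, card_filter, ← sum_add_distrib]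
  refine sum_congr rfl fun e _ => ?_
  by_cases (G.ends e).1 ∈ Z <;> by_cases (G.ends e).1 ∈ Z' <;>
    by_cases (G.ends e).2 ∈ Z <;> by_cases (G.ends e).2 ∈ Z' <;> simp [*]

lemma k_eq_sum_card_cut_right : G.k Z' =
    #(G.cut (Z ∩ Z') (Z \ Z')) + #(G.cut (Z ∩ Z') (Z ∪ Z')ᶜ) +
      #(G.cut (Z \ Z') (Z' \ Z)) + #(G.cut (Z' \ Z) (Z ∪ Z')ᶜ) := by
  simp only [k, Term, cut, card_filter, ← sum_add_distrib]
  refine sum_congr rfl fun e _ => ?_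
  by_cases (G.ends e).1 ∈ Z <;> by_cases (G.ends e).1 ∈ Z' <;>
    by_cases (G.ends e).2 ∈ Z <;> by_cases (G.ends e).2 ∈ Z' <;> simp [*]

lemma k_inter_eq_sum_card_cut : G.k (Z ∩ Z') =
    #(G.cut (Z ∩ Z') (Z \ Z')) + #(G.cut (Z ∩ Z') (Z' \ Z)) + #(G.cut (Z ∩ Z') (Z ∪ Z')ᶜ) := by
  simp only [k, Term, cut, card_filter, ← sum_add_distrib]
  refine sum_congr rfl fun e _ => ?_
  by_cases (G.ends e).1 ∈ Z <;> by_cases (G.ends e).1 ∈ Z' <;>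
    by_cases (G.ends e).2 ∈ Z <;> by_cases (G.ends e).2 ∈ Z' <;> simp [*]

lemma k_union_eq_sum_card_cut : G.k (Z ∪ Z') =
    #(G.cut (Z ∩ Z') (Z ∪ Z')ᶜ) + #(G.cut (Z \ Z') (Z ∪ Z')ᶜ) + #(G.cut (Z' \ Z) (Z ∪ Z')ᶜ) := by
  simp only [k, Term, cut, card_filter, ← sum_add_distrib]
  refine sum_congr rfl fun e _ => ?_
  by_cases (G.ends e).1 ∈ Z <;> by_cases (G.ends e).1 ∈ Z' <;>
    by_cases (G.ends e).2 ∈ Z <;> by_cases (G.ends e).2 ∈ Z' <;> simp [*]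

lemma card_Term_inter_Term : #(G.Term Z ∩ G.Term Z') =
    #(G.cut (Z ∩ Z') (Z ∪ Z')ᶜ) + #(G.cut (Z \ Z') (Z' \ Z)) := by
  simp only [Term, cut, ← filter_and, card_filter, ← sum_add_distrib]
  refine sum_congr rfl fun e _ => ?_
  by_cases (G.ends e).1 ∈ Z <;> by_cases (G.ends e).1 ∈ Z' <;>
    by_cases (G.ends e).2 ∈ Z <;> by_cases (G.ends e).2 ∈ Z' <;> simp [*]

lemma inter_union_sdiff_eq : Z ∩ Z' ∪ Z \ Z' = Z := sup_inf_sdiff Z Z'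

lemma sdiff_union_compl_union : Z \ Z' ∪ (Z ∪ Z')ᶜ = Z'ᶜ := by
  ext v; by_cases v ∈ Z <;> simp [*]

variable {Z Z'}

lemma one_le_card_cut_of_crossing {γ b : G.V} (hZ : G.ConnSub Z) (hZ' : G.ConnSub Z')
    (hZc : G.ConnSub Zᶜ) (hZ'c : G.ConnSub Z'ᶜ) (hγ : γ ∈ Z ∩ Z') (hb : b ∉ Z ∪ Z')
    (hQ : ¬ Z ⊆ Z') (hR : ¬ Z' ⊆ Z) :
    1 ≤ #(G.cut (Z ∩ Z') (Z \ Z')) ∧ 1 ≤ #(G.cut (Z ∩ Z') (Z' \ Z)) ∧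
      1 ≤ #(G.cut (Z \ Z') (Z ∪ Z')ᶜ) ∧ 1 ≤ #(G.cut (Z' \ Z) (Z ∪ Z')ᶜ) := by
  have hS : (Z ∪ Z')ᶜ.Nonempty := ⟨b, mem_compl.2 hb⟩
  simp only [Nat.one_le_iff_ne_zero, ne_eq, card_eq_zero, ← not_nonempty_iff_eq_empty, not_not]
  refine ⟨cut_nonempty ?_ ?_ ⟨γ, hγ⟩ (sdiff_nonempty.2 hQ),
    cut_nonempty ?_ ?_ ⟨γ, hγ⟩ (sdiff_nonempty.2 hR),
    cut_nonempty ?_ ?_ (sdiff_nonempty.2 hQ) hS, cut_nonempty ?_ ?_ (sdiff_nonempty.2 hR) hS⟩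
  · rwa [inter_union_sdiff_eq]
  · exact (disjoint_sdiff_inter Z Z').symm
  · rwa [inter_comm, inter_union_sdiff_eq]
  · exact inter_comm Z Z' ▸ (disjoint_sdiff_inter Z' Z).symm
  · rwa [sdiff_union_compl_union]
  · exact disjoint_compl_right.mono_left (sdiff_subset.trans subset_union_left)
  · rwa [union_comm Z Z', sdiff_union_compl_union]
  · exact disjoint_compl_right.mono_left (sdiff_subset.trans subset_union_right)

lemma connSub_inter_of_card_cut_eq_one (hZ : G.ConnSub Z) (hQ : ¬ Z ⊆ Z')
    (h : #(G.cut (Z ∩ Z') (Z \ Z')) = 1) : G.ConnSub (Z ∩ Z') := by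
  obtain ⟨e, he⟩ := card_eq_one.1 h
  exact connSub_of_cut_eq_singleton (by rwa [inter_union_sdiff_eq]) (disjoint_sdiff_inter Z Z').symm
    (sdiff_nonempty.2 hQ) he

lemma connSub_compl_union_of_card_cut_eq_one (hZc : G.ConnSub Zᶜ) (hR : ¬ Z' ⊆ Z)
    (h : #(G.cut (Z' \ Z) (Z ∪ Z')ᶜ) = 1) : G.ConnSub (Z ∪ Z')ᶜ := by
  obtain ⟨e, he⟩ := card_eq_one.1 h
  exact connSub_of_cut_eq_singleton (by rwa [union_comm, union_comm Z, sdiff_union_compl_union])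
    (disjoint_compl_left.mono_right (sdiff_subset.trans subset_union_right)) (sdiff_nonempty.2 hR)
    (cut_comm.trans he)

lemma connSub_compl_inter {b : G.V} (hZc : G.ConnSub Zᶜ) (hZ'c : G.ConnSub Z'ᶜ)
    (hb : b ∉ Z ∪ Z') : G.ConnSub (Z ∩ Z')ᶜ := by
  rw [mem_union, not_or] at hb
  rw [compl_inter]
  exact hZc.union hZ'c (mem_compl.2 hb.1) (mem_compl.2 hb.2)

end FourParts

lemma isKTail_of_connSub {A : Finset G.V} {b : G.V} {m : ℕ} (hb : b ∉ A) (hA : G.ConnSub A)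
    (hAc : G.ConnSub Aᶜ) (hk : G.k A = m) : G.IsKTail A m :=
  ⟨⟨fun h => hb (h ▸ mem_univ b), hA, hAc⟩, hk⟩

section Free

variable {A B C D : Finset G.V}

lemma free.symm (h : G.free A B) : G.free B A := by rwa [free, inter_comm]

lemma free_empty_left : G.free ∅ A := by
  simp [free, Term]

lemma Term_inter_subset : G.Term (A ∩ B) ⊆ G.Term A ∪ G.Term B := by
  intro e; simp only [Term, mem_filter, mem_univ, true_and, mem_union, mem_inter]; tauto

lemma Term_union_subset : G.Term (A ∪ B) ⊆ G.Term A ∪ G.Term B := by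
  intro e; simp only [Term, mem_filter, mem_univ, true_and, mem_union]; tauto

lemma free_of_Term_subset (h : G.Term A ⊆ G.Term B ∪ G.Term C) (hB : G.free B D)
    (hC : G.free C D) : G.free A D := by
  rw [free, ← subset_empty] at *
  calc G.Term A ∩ G.Term D ⊆ (G.Term B ∪ G.Term C) ∩ G.Term D := inter_subset_inter_right h
    _ = G.Term B ∩ G.Term D ∪ G.Term C ∩ G.Term D := union_inter_distrib_right _ _ _
    _ ⊆ ∅ := union_subset hB hC

lemma free.inter (hA : G.free A C) (hB : G.free B C) : G.free (A ∩ B) C :=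
  free_of_Term_subset Term_inter_subset hA hB

lemma free.union (hA : G.free A C) (hB : G.free B C) : G.free (A ∪ B) C :=
  free_of_Term_subset Term_union_subset hA hB

lemma prec_of_subset_of_free (h : A ⊆ B) (hf : G.free A B) (hB : G.k B ≠ 0) : G.prec A B := by
  refine ⟨Finset.ssubset_iff_subset_ne.2 ⟨h, ?_⟩, hf⟩
  rintro rfl
  rw [free, inter_self] at hf
  simp [k, hf] at hB

end Free

section Wedge

variable {Z Z' : Finset G.V} {γ b : G.V}

lemma isKTail_two_inter_of_free (hZ : G.IsKTail Z 2) (hZ' : G.IsKTail Z' 2)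
    (hfree : G.free Z Z') (hγ : γ ∈ Z ∩ Z') (hb : b ∉ Z ∪ Z') : G.IsKTail (Z ∩ Z') 2 := by
  by_cases hQ : Z ⊆ Z'
  · rwa [inter_eq_left.2 hQ]
  by_cases hR : Z' ⊆ Z
  · rwa [inter_eq_right.2 hR]
  obtain ⟨⟨-, hZconn, hZc⟩, hkZ⟩ := hZ
  obtain ⟨⟨-, hZ'conn, hZ'c⟩, hkZ'⟩ := hZ'
  have hcross := one_le_card_cut_of_crossing hZconn hZ'conn hZc hZ'c hγ hb hQ hR
  have hTT : #(G.Term Z ∩ G.Term Z') = 0 := by rw [hfree, card_empty]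
  rw [card_Term_inter_Term] at hTT
  rw [k_eq_sum_card_cut_left Z Z'] at hkZ
  rw [k_eq_sum_card_cut_right Z Z'] at hkZ'
  exact isKTail_of_connSub (fun h => hb (mem_union_left _ (mem_inter.1 h).1))
    (connSub_inter_of_card_cut_eq_one hZconn hQ (by omega)) (connSub_compl_inter hZc hZ'c hb)
    (by rw [k_inter_eq_sum_card_cut]; omega)

lemma isKTail_three_inter_or (hZ : G.IsKTail Z 3) (hZ' : G.IsKTail Z' 3)
    (hγ : γ ∈ Z ∩ Z') (hb : b ∉ Z ∪ Z') :
    G.IsKTail (Z ∩ Z') 3 ∨ G.IsKTail (Z ∩ Z') 2 ∨ G.IsKTail (Z ∪ Z') 2 := by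
  by_cases hQ : Z ⊆ Z'
  · rw [inter_eq_left.2 hQ]; exact .inl hZ
  by_cases hR : Z' ⊆ Z
  · rw [inter_eq_right.2 hR]; exact .inl hZ'
  obtain ⟨⟨-, hZconn, hZc⟩, hkZ⟩ := hZ
  obtain ⟨⟨-, hZ'conn, hZ'c⟩, hkZ'⟩ := hZ'
  have hcross := one_le_card_cut_of_crossing hZconn hZ'conn hZc hZ'c hγ hb hQ hR
  rw [k_eq_sum_card_cut_left Z Z'] at hkZ
  rw [k_eq_sum_card_cut_right Z Z'] at hkZ'
  have hkP := k_inter_eq_sum_card_cut Z Z'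
  have hkU := k_union_eq_sum_card_cut Z Z'
  have hbP : b ∉ Z ∩ Z' := fun h => hb (mem_union_left _ (mem_inter.1 h).1)
  have hPc := connSub_compl_inter hZc hZ'c hb
  rcases (by omega : G.k (Z ∩ Z') = 3 ∨ (G.k (Z ∩ Z') = 2 ∧ #(G.cut (Z ∩ Z') (Z \ Z')) = 1) ∨
      (G.k (Z ∪ Z') = 2 ∧ #(G.cut (Z' \ Z) (Z ∪ Z')ᶜ) = 1)) with hP3 | ⟨hP2, hPQ⟩ | ⟨hU2, hRS⟩
  · refine .inl (isKTail_of_connSub hbP ?_ hPc hP3)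
    rcases (by omega : #(G.cut (Z ∩ Z') (Z \ Z')) = 1 ∨ #(G.cut (Z ∩ Z') (Z' \ Z)) = 1)
      with hPQ | hPR
    · exact connSub_inter_of_card_cut_eq_one hZconn hQ hPQ
    · rw [inter_comm] at hPR ⊢
      exact connSub_inter_of_card_cut_eq_one hZ'conn hR hPR
  · exact .inr (.inl (isKTail_of_connSub hbP (connSub_inter_of_card_cut_eq_one hZconn hQ hPQ)
      hPc hP2))
  · exact .inr (.inr (isKTail_of_connSub hb (hZconn.union hZ'conn
      (mem_inter.1 hγ).1 (mem_inter.1 hγ).2) (connSub_compl_union_of_card_cut_eq_one hZc hR hRS)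
      hU2))

end Wedge

section Nested

variable {γ γ' : G.V} {P W T : Finset G.V}

/-- Otherwise `W ∩ T` would be a smaller admissible 2-tail. -/
lemma subset_of_minimal_of_free (hmin : Minimal (fun Z => G.cond2 γ γ' Z ∧ G.prec P Z) W)
    (hT : G.cond2 γ γ' T) (hWT : G.free W T) (hPT : P ⊆ T) (hPfree : G.free P T) : W ⊆ T := by
  obtain ⟨⟨⟨hW, hγW, hγ'W, hbW⟩, hPW⟩, hmin⟩ := hmin
  obtain ⟨hT, hγT, hγ'T, hbT⟩ := hT
  have hWT2 : G.IsKTail (W ∩ T) 2 :=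
    isKTail_two_inter_of_free hW hT hWT (b := G.base) (mem_inter.2 ⟨hγW, hγT⟩)
      (by simp [hbW, hbT])
  have hPWT : G.prec P (W ∩ T) := by
    refine prec_of_subset_of_free (subset_inter hPW.1.subset hPT) ?_ (by rw [hWT2.2]; norm_num)
    exact ((free.symm hPW.2).inter hPfree.symm).symm
  have hle := hmin ⟨⟨hWT2, mem_inter.2 ⟨hγW, hγT⟩, mem_inter.2 ⟨hγ'W, hγ'T⟩,
    fun h => hbW (mem_inter.1 h).1⟩, hPWT⟩ inter_subset_left
  exact hle.trans inter_subset_right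

lemma IsNested2.subset_of_free {M : ℕ} {W : ℕ → Finset G.V} (h2 : G.IsNested2 γ γ' M W)
    (hT : G.cond2 γ γ' T) (hfree : ∀ t < M, G.free (W t) T) : ∀ t < M, W t ⊆ T := by
  intro t
  induction t with
  | zero =>
    intro h
    have hmin := h2.1 0 h
    simp only [↓reduceIte] at hmin
    exact subset_of_minimal_of_free hmin hT (hfree 0 h) (empty_subset _) free_empty_left
  | succ n ih =>
    intro h
    have hmin := h2.1 (n + 1) h
    simp only [Nat.add_one_ne_zero, ↓reduceIte, Nat.add_sub_cancel] at hmin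
    exact subset_of_minimal_of_free hmin hT (hfree _ h) (ih (by omega)) (hfree n (by omega))

lemma IsNested2.not_cond2_of_forall_free {M : ℕ} {W : ℕ → Finset G.V} (h2 : G.IsNested2 γ γ' M W)
    (hfree : ∀ Wt ∈ G.chainSet M W, G.free Wt T) : ¬ G.cond2 γ γ' T := by
  intro hT
  have hsub := h2.subset_of_free hT fun t ht => hfree _ ⟨t, ht, rfl⟩
  refine h2.2 ⟨T, hT, prec_of_subset_of_free ?_ ?_ (by rw [hT.1.2]; norm_num)⟩
  · split_ifs with hM
    · exact empty_subset _
    · exact hsub _ (by omega)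
  · split_ifs with hM
    · exact free_empty_left
    · exact hfree _ ⟨M - 1, by omega, rfl⟩

end Nested

end NodalGraph

theorem wedge_of_three_tails_general
    (G : NodalGraph) (γ γ' : G.V)
    (M2 : ℕ) (W2 : ℕ → Finset G.V) (h2 : G.IsNested2 γ γ' M2 W2)
    (Z Z' : Finset G.V) (hZ : G.IsKTail Z 3) (hZ' : G.IsKTail Z' 3)
    (hfZ : ∀ Wt ∈ G.chainSet M2 W2, G.free Z Wt)
    (hfZ' : ∀ Wt ∈ G.chainSet M2 W2, G.free Z' Wt)
    (hγ : γ ∈ Z ∩ Z') (hγ' : γ' ∈ Z ∩ Z')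
    (hb : G.base ∈ Zᶜ ∩ Z'ᶜ) :
    G.IsKTail (Z ∩ Z') 3 ∧ ∀ Wt ∈ G.chainSet M2 W2, G.free (Z ∩ Z') Wt := by
  have hb' : G.base ∉ Z ∪ Z' := by simpa using hb
  refine ⟨?_, fun Wt hWt => (hfZ Wt hWt).inter (hfZ' Wt hWt)⟩
  rcases NodalGraph.isKTail_three_inter_or hZ hZ' hγ hb' with hP3 | hP2 | hU2
  · exact hP3
  · refine absurd ⟨hP2, hγ, hγ', fun h => hb' (mem_union_left _ (mem_inter.1 h).1)⟩
      (h2.not_cond2_of_forall_free fun Wt hWt => ((hfZ Wt hWt).inter (hfZ' Wt hWt)).symm)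
  · refine absurd ⟨hU2, mem_union_left _ (mem_inter.1 hγ).1, mem_union_left _ (mem_inter.1 hγ').1,
      hb'⟩ (h2.not_cond2_of_forall_free fun Wt hWt => ((hfZ Wt hWt).union (hfZ' Wt hWt)).symm)

/-- Lemma 2.3: the wedge of two `T²_{γ,γ'}`-free 3-tails
containing `C_γ ∪ C_{γ'}` and avoiding `σ(0)` is again a `T²_{γ,γ'}`-free
3-tail. -/
theorem wedge_of_three_tails
    (G : NodalGraph) (hconn : G.Connected) (γ γ' : G.V)
    (M2 : ℕ) (W2 : ℕ → Finset G.V) (h2 : G.IsNested2 γ γ' M2 W2)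
    (Z Z' : Finset G.V) (hZ : G.IsKTail Z 3) (hZ' : G.IsKTail Z' 3)
    (hfZ : ∀ Wt ∈ G.chainSet M2 W2, G.free Z Wt)
    (hfZ' : ∀ Wt ∈ G.chainSet M2 W2, G.free Z' Wt)
    (hγ : γ ∈ Z ∩ Z') (hγ' : γ' ∈ Z ∩ Z')
    (hb : G.base ∈ Zᶜ ∩ Z'ᶜ) :
    G.IsKTail (Z ∩ Z') 3 ∧ ∀ Wt ∈ G.chainSet M2 W2, G.free (Z ∩ Z') Wt :=
  wedge_of_three_tails_general G γ γ' M2 W2 h2 Z Z' hZ hZ' hfZ hfZ' hγ hγ' hb
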